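/- arXiv:1410.0739 — 3 statements merged into one kernel-verified Lean document; each statement's English description precedes it below -/
import Mathlib

section
/- Let ξ be a random variable, and let C₁ > 0, q > 0 and r be constants such that max(P(ξ ≥ x), P(ξ ≤ −x)) ≤ exp(−C₁ x^q (ln x)^{−q r}) for all x > e. Then there exists a constant C₃ = C₃(C₁, q, r) < ∞ such that for all p ≥ 4: |ξ|_p ≤ C₃ · p^{1/q} · (ln p)^r. -/
open MeasureTheory ProbabilityTheory Real Filter Finset
open scoped ENNReal

/-- The Lebesgue `L^p` moment norm `|f|_p = (E |f|^p)^{1/p}` (real exponent). -/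
noncomputable def Lnorm {Ω : Type*} [MeasurableSpace Ω] (μ : Measure Ω) (p : ℝ)
    (f : Ω → ℝ) : ℝ :=
  (∫ ω, |f ω| ^ p ∂μ) ^ (1 / p)

/-- Osekowski's function `Os(p) = 4√2 (p/4+1)^{1/p} (1 + p / ln(p/2))`. -/
noncomputable def Os (p : ℝ) : ℝ :=
  4 * Real.sqrt 2 * (p / 4 + 1) ^ (1 / p) * (1 + p / Real.log (p / 2))

/-- The Osekowski constant `K_Os = sup_{p ≥ 4} Os(p) ln p / p`. -/
noncomputable def KOs : ℝ :=
  sSup ((fun p => Os p * Real.log p / p) '' {p : ℝ | 4 ≤ p})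


/-!
If `P(|ξ| ≥ x) ≤ (T / 2x)^(p+1)` for all `x ≥ T`, a dyadic decomposition of `|ξ|^p` over the
shells `T 2^k ≤ |ξ| < T 2^(k+1)` gives `E|ξ|^p ≤ 2 T^p`, hence `|ξ|_p ≤ 2T`. Take
`T = c p^(1/q) (ln p)^r`. For `x = T s` with `s ≥ 1` the exponent of the tail bound is
`C₁ c^q p s^q (ln x / ln p)^(-qr)`, and `ln x / ln p` lies between `1/(2q)` and
`(ln c + 1/q + |r|)(1 + ln s)`. Since `s^q` beats every power of `1 + ln s` and `c^q` beats every
power of `ln c`, the exponent exceeds `2p(1 + ln s)` once `c` is large, uniformly in `p ≥ 4`;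
this is the required tail.
-/

lemma one_add_log_rpow_le {q β s : ℝ} (hq : 0 < q) (hβ : 0 < β) (hs : 1 ≤ s) :
    (1 + log s) ^ β ≤ (1 + β / q) ^ β * s ^ q := by
  have hε : 0 < q / β := div_pos hq hβ
  have hlog : 1 + log s ≤ (1 + β / q) * s ^ (q / β) := by
    have h1 : 1 ≤ s ^ (q / β) := one_le_rpow hs hε.le
    have h2 : log s ≤ s ^ (q / β) / (q / β) := log_le_rpow_div (by linarith) hε
    rw [div_div_eq_mul_div, mul_div_assoc] at h2
    nlinarith
  calc (1 + log s) ^ β ≤ ((1 + β / q) * s ^ (q / β)) ^ β :=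
        rpow_le_rpow (by linarith [log_nonneg hs]) hlog hβ.le
    _ = (1 + β / q) ^ β * s ^ q := by
        rw [mul_rpow (by positivity) (by positivity), ← rpow_mul (by linarith),
          div_mul_cancel₀ _ hβ.ne']

lemma min_rpow_mul_rpow_neg_abs_le {δ Λ u w : ℝ} (b : ℝ) (hδ : 0 < δ) (hw : 1 ≤ w)
    (hδu : δ ≤ u) (huΛ : u ≤ Λ * w) : min (δ ^ b) (Λ ^ b) * w ^ (-|b|) ≤ u ^ b := by
  have hu : 0 < u := hδ.trans_le hδu
  have hΛ : 0 < Λ := pos_of_mul_pos_left (hu.trans_le huΛ) (by linarith)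
  rcases le_total 0 b with hb | hb
  · calc min (δ ^ b) (Λ ^ b) * w ^ (-|b|) ≤ δ ^ b * 1 :=
          mul_le_mul (min_le_left _ _) (rpow_le_one_of_one_le_of_nonpos hw (by simp))
            (by positivity) (by positivity)
      _ ≤ u ^ b := by rw [mul_one]; exact rpow_le_rpow hδ.le hδu hb
  · calc min (δ ^ b) (Λ ^ b) * w ^ (-|b|) ≤ Λ ^ b * w ^ b := by
          rw [abs_of_nonpos hb, neg_neg]
          gcongr
          exact min_le_right _ _
      _ = (Λ * w) ^ b := (mul_rpow hΛ.le (by linarith)).symm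
      _ ≤ u ^ b := rpow_le_rpow_of_nonpos hu huΛ hb

lemma add_div_add_mul_log_le {a q r L : ℝ} (ha : 0 ≤ a) (hL : 1 ≤ L) :
    a + L / q + r * log L ≤ (a + 1 / q + |r|) * L := by
  have h1 : r * log L ≤ |r| * L :=
    (mul_le_mul_of_nonneg_right (le_abs_self r) (log_nonneg hL)).trans
      (mul_le_mul_of_nonneg_left ((log_le_sub_one_of_pos (by linarith)).trans (by linarith))
        (abs_nonneg r))
  have h2 : a ≤ a * L := le_mul_of_one_le_right ha hL
  rw [add_mul, add_mul, one_div_mul_eq_div]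
  linarith

lemma div_two_mul_add_one_le {a q r L : ℝ} (hq : 0 < q) (hL : 1 ≤ L)
    (ha : 1 + |r| * log (2 * q * (|r| + 1)) ≤ a) :
    L / (2 * q) + 1 ≤ a + L / q + r * log L := by
  set κ := 2 * q * (|r| + 1)
  have hκ : 0 < κ := by positivity
  -- `κ` is large enough that `|r| / κ ≤ 1 / (2q)`; then use `log (L / κ) ≤ L / κ - 1`.
  have hlog : log L ≤ L / κ + log κ := by
    have := log_le_sub_one_of_pos (div_pos (by linarith : (0 : ℝ) < L) hκ)
    rw [log_div (by linarith) hκ.ne'] at this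
    linarith
  have hrκ : |r| * (L / κ) ≤ L / (2 * q) := by
    rw [show κ = 2 * q * (|r| + 1) from rfl, ← mul_div_assoc, div_le_div_iff₀ hκ (by positivity)]
    have : 0 ≤ L * (2 * q) := by positivity
    nlinarith [abs_nonneg r]
  have hr : -(|r| * log L) ≤ r * log L := by
    rw [← neg_mul]; exact mul_le_mul_of_nonneg_right (neg_abs_le r) (log_nonneg hL)
  have hhalf : L / q = L / (2 * q) + L / (2 * q) := by field_simp; ring
  nlinarith [mul_le_mul_of_nonneg_left hlog (abs_nonneg r)]

lemma eventually_le_rpow_mul_log_add_rpow {q : ℝ} (hq : 0 < q) (K A β : ℝ) :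
    ∀ᶠ c in atTop, K ≤ c ^ q * (log c + A) ^ β := by
  have hlo := ((isLittleO_log_rpow_rpow_atTop (-β) hq).comp_tendsto
    (tendsto_id.const_mul_atTop (exp_pos A))).def (c := (|K| + 1)⁻¹ * exp (-(A * q)))
      (by positivity)
  filter_upwards [hlo, eventually_gt_atTop 0, tendsto_log_atTop.eventually_gt_atTop (-A)]
    with c hc hc0 hcA
  have hpos : 0 < log c + A := by linarith
  have hbound : (log c + A) ^ (-β) ≤ c ^ q / (|K| + 1) := by
    rw [Function.comp_apply, Function.comp_apply, id, log_mul (exp_pos A).ne' hc0.ne', log_exp,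
      add_comm, norm_of_nonneg (by positivity), norm_of_nonneg (by positivity),
      mul_rpow (exp_pos A).le hc0.le, ← exp_mul, mul_comm A q] at hc
    have hconst : (|K| + 1)⁻¹ * exp (-(q * A)) * (exp (q * A) * c ^ q) = c ^ q / (|K| + 1) := by
      rw [exp_neg]; field_simp
    rwa [hconst] at hc
  rw [rpow_neg hpos.le, inv_le_iff_one_le_mul₀ (rpow_pos_of_pos hpos β), div_mul_eq_mul_div,
    one_le_div (by positivity)] at hbound
  linarith [le_abs_self K]

lemma two_mul_exp_neg_le_rpow {p s y : ℝ} (hp : 2 ≤ p) (hs : 1 ≤ s)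
    (h : 2 * p * (1 + log s) ≤ y) : 2 * exp (-y) ≤ (1 / (2 * s)) ^ (p + 1) := by
  have hlog : log (1 / (2 * s)) = -(log 2 + log s) := by
    rw [one_div, log_inv, log_mul two_ne_zero (by linarith)]
  rw [rpow_def_of_pos (by positivity), hlog, ← exp_log two_pos, ← exp_add, exp_log two_pos]
  refine exp_le_exp.mpr ?_
  nlinarith [log_nonneg hs, log_two_lt_d9, log_pos one_lt_two]

lemma scale_rpow_mul_rpow {c p L s y q r : ℝ} (hq : 0 < q) (hc : 0 < c) (hp : 0 < p) (hL : 0 < L)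
    (hs : 0 < s) (hy : 0 < y) :
    (c * p ^ (1 / q) * L ^ r * s) ^ q * y ^ (-(q * r)) =
      c ^ q * p * s ^ q * (y / L) ^ (-(q * r)) := by
  rw [mul_rpow (by positivity) hs.le, mul_rpow (by positivity) (by positivity),
    mul_rpow hc.le (by positivity), ← rpow_mul hp.le, one_div_mul_cancel hq.ne', rpow_one,
    ← rpow_mul hL.le, div_rpow hy.le hL.le, rpow_neg hL.le, mul_comm r q]
  field_simp

lemma log_four_gt_one : 1 < log 4 := by
  rw [lt_log_iff_exp_lt four_pos]
  linarith [exp_one_lt_d9]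

lemma log_scale_bounds {c q r p : ℝ} (hq : 0 < q) (hc : 0 < c) (hc0 : 0 ≤ log c)
    (hcr : 1 + |r| * log (2 * q * (|r| + 1)) ≤ log c) (hp : 4 ≤ p) :
    log p / (2 * q) + 1 ≤ log (c * p ^ (1 / q) * log p ^ r) ∧
      log (c * p ^ (1 / q) * log p ^ r) ≤ (log c + (1 / q + |r|)) * log p := by
  have hL : 1 ≤ log p := log_four_gt_one.le.trans (log_le_log four_pos hp)
  have hlogT : log (c * p ^ (1 / q) * log p ^ r) = log c + log p / q + r * log (log p) := by
    rw [log_mul (by positivity) (by positivity), log_mul hc.ne' (by positivity),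
      log_rpow (by linarith), log_rpow (by linarith)]
    ring
  rw [hlogT, ← add_assoc]
  exact ⟨div_two_mul_add_one_le hq hL hcr, add_div_add_mul_log_le hc0 hL⟩

lemma two_mul_one_add_log_le {C₁ q r c p L Λ M s : ℝ} (hC₁ : 0 ≤ C₁) (hq : 0 < q) (hc : 0 < c)
    (hp : 0 < p) (hL : 0 < L) (hs : 1 ≤ s)
    (hlower : L / (2 * q) ≤ log (c * p ^ (1 / q) * L ^ r))
    (hupper : log (c * p ^ (1 / q) * L ^ r) ≤ Λ * L) (hΛL : 1 ≤ Λ * L)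
    (hM : (1 + log s) ^ (1 + |q * r|) ≤ M * s ^ q)
    (hc' : 2 * M ≤ C₁ * (c ^ q * min ((1 / (2 * q)) ^ (-(q * r))) (Λ ^ (-(q * r))))) :
    2 * p * (1 + log s) ≤ C₁ * (c * p ^ (1 / q) * L ^ r * s) ^ q *
      log (c * p ^ (1 / q) * L ^ r * s) ^ (-(q * r)) := by
  set b := -(q * r)
  set T := c * p ^ (1 / q) * L ^ r
  set w := 1 + log s
  have hw : 1 ≤ w := by linarith [log_nonneg hs]
  have hT : 0 < T := by positivity
  have hlogx : log (T * s) = log T + log s := log_mul hT.ne' (by positivity)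
  have hx : 0 < log (T * s) := by
    rw [hlogx]; linarith [log_nonneg hs, div_pos hL (by linarith : 0 < 2 * q)]
  have hu : min ((1 / (2 * q)) ^ b) (Λ ^ b) * w ^ (-|q * r|) ≤ (log (T * s) / L) ^ b := by
    rw [← abs_neg]
    apply min_rpow_mul_rpow_neg_abs_le b (by positivity) hw
    · rw [le_div_iff₀ hL, hlogx, one_div_mul_eq_div]
      linarith [log_nonneg hs]
    · rw [div_le_iff₀ hL, hlogx]
      nlinarith [mul_le_mul_of_nonneg_right hΛL (log_nonneg hs)]
  have hw' : w ≤ M * s ^ q * w ^ (-|q * r|) :=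
    calc w = w ^ (1 + |q * r|) * w ^ (-|q * r|) := by
          rw [← rpow_add (by linarith), add_neg_cancel_right, rpow_one]
      _ ≤ M * s ^ q * w ^ (-|q * r|) := by gcongr
  have hscale : (T * s) ^ q * log (T * s) ^ b = c ^ q * p * s ^ q * (log (T * s) / L) ^ b :=
    scale_rpow_mul_rpow hq hc hp hL (by linarith) hx
  calc 2 * p * w ≤ 2 * p * (M * s ^ q * w ^ (-|q * r|)) := by gcongr
    _ = p * s ^ q * w ^ (-|q * r|) * (2 * M) := by ring
    _ ≤ p * s ^ q * w ^ (-|q * r|) * (C₁ * (c ^ q * min ((1 / (2 * q)) ^ b) (Λ ^ b))) := by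
        gcongr
    _ = C₁ * (c ^ q * p * s ^ q * (min ((1 / (2 * q)) ^ b) (Λ ^ b) * w ^ (-|q * r|))) := by ring
    _ ≤ C₁ * (c ^ q * p * s ^ q * (log (T * s) / L) ^ b) := by gcongr
    _ = C₁ * (T * s) ^ q * log (T * s) ^ b := by rw [← hscale, mul_assoc C₁]

lemma eventually_tail_scale {C₁ q : ℝ} (hC₁ : 0 < C₁) (hq : 0 < q) (r : ℝ) :
    ∀ᶠ c in atTop, ∀ p : ℝ, 4 ≤ p →
      exp 1 < c * p ^ (1 / q) * log p ^ r ∧ ∀ s : ℝ, 1 ≤ s →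
        2 * p * (1 + log s) ≤ C₁ * (c * p ^ (1 / q) * log p ^ r * s) ^ q *
          log (c * p ^ (1 / q) * log p ^ r * s) ^ (-(q * r)) := by
  set M := (1 + (1 + |q * r|) / q) ^ (1 + |q * r|)
  filter_upwards [eventually_gt_atTop 0, tendsto_log_atTop.eventually_ge_atTop 1,
    tendsto_log_atTop.eventually_ge_atTop (1 + |r| * log (2 * q * (|r| + 1))),
    (tendsto_rpow_atTop hq).eventually_ge_atTop (2 * M / C₁ / (1 / (2 * q)) ^ (-(q * r))),
    eventually_le_rpow_mul_log_add_rpow hq (2 * M / C₁) (1 / q + |r|) (-(q * r))]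
    with c hc hc1 hcr hcδ hcΛ
  intro p hp
  obtain ⟨hlower, hupper⟩ := log_scale_bounds hq hc (by linarith) hcr hp
  have hL : 1 ≤ log p := log_four_gt_one.le.trans (log_le_log four_pos hp)
  have hLq : 0 < log p / (2 * q) := by positivity
  have hT : 0 < c * p ^ (1 / q) * log p ^ r := by positivity
  refine ⟨by rw [← exp_log hT]; exact exp_lt_exp.mpr (by linarith), fun s hs => ?_⟩
  refine two_mul_one_add_log_le hC₁.le hq hc (by linarith) (by linarith) hs (by linarith) hupper
    (by nlinarith [abs_nonneg r, one_div_pos.mpr hq]) (one_add_log_rpow_le hq (by positivity) hs) ?_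
  rw [← div_le_iff₀' hC₁, mul_min_of_nonneg _ _ (by positivity)]
  exact le_min ((div_le_iff₀ (by positivity)).mp hcδ) hcΛ

lemma measure_le_abs_le_two_mul {Ω : Type*} [MeasurableSpace Ω] {μ : Measure Ω} {ξ : Ω → ℝ}
    {x : ℝ} {a : ℝ≥0∞} (h : max (μ {ω | x ≤ ξ ω}) (μ {ω | ξ ω ≤ -x}) ≤ a) :
    μ {ω | x ≤ |ξ ω|} ≤ 2 * a := by
  have hsub : {ω | x ≤ |ξ ω|} ⊆ {ω | x ≤ ξ ω} ∪ {ω | ξ ω ≤ -x} := fun _ (hω : x ≤ |_|) =>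
    (le_abs'.mp hω).symm
  calc μ {ω | x ≤ |ξ ω|} ≤ μ {ω | x ≤ ξ ω} + μ {ω | ξ ω ≤ -x} :=
        (measure_mono hsub).trans (measure_union_le _ _)
    _ ≤ a + a := add_le_add ((le_max_left _ _).trans h) ((le_max_right _ _).trans h)
    _ = 2 * a := (two_mul a).symm

lemma ofReal_rpow_le_add_tsum_indicator {x T p : ℝ} (hx : 0 ≤ x) (hT : 0 < T) (hp : 0 ≤ p) :
    ENNReal.ofReal (x ^ p) ≤ ENNReal.ofReal (T ^ p) +
      ∑' k : ℕ, {y : ℝ | T * 2 ^ k ≤ y}.indicator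
        (fun _ => ENNReal.ofReal ((T * 2 ^ (k + 1)) ^ p)) x := by
  rcases lt_or_ge x T with hxT | hTx
  · exact (ENNReal.ofReal_le_ofReal (rpow_le_rpow hx hxT.le hp)).trans le_self_add
  obtain ⟨k, hk, hk'⟩ := exists_nat_pow_near ((one_le_div hT).mpr hTx) one_lt_two
  rw [le_div_iff₀ hT, mul_comm] at hk
  rw [div_lt_iff₀ hT, mul_comm] at hk'
  calc ENNReal.ofReal (x ^ p) ≤ ENNReal.ofReal ((T * 2 ^ (k + 1)) ^ p) :=
        ENNReal.ofReal_le_ofReal (rpow_le_rpow hx hk'.le hp)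
    _ = {y : ℝ | T * 2 ^ k ≤ y}.indicator
          (fun _ => ENNReal.ofReal ((T * 2 ^ (k + 1)) ^ p)) x :=
        (Set.indicator_of_mem (s := {y : ℝ | T * 2 ^ k ≤ y}) hk
          (fun _ => ENNReal.ofReal ((T * 2 ^ (k + 1)) ^ p))).symm
    _ ≤ _ := ENNReal.le_tsum k
    _ ≤ _ := le_add_self

lemma rpow_mul_div_rpow_add_one {T y p : ℝ} (hT : 0 < T) (hy : 0 < y) :
    y ^ p * (T / y) ^ (p + 1) = T ^ p * (T / y) := by
  rw [rpow_add_one (div_pos hT hy).ne', ← mul_assoc, ← mul_rpow hy.le (div_pos hT hy).le,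
    mul_div_cancel₀ _ hy.ne']

lemma lintegral_ofReal_rpow_abs_le {Ω : Type*} [MeasurableSpace Ω] {μ : Measure Ω}
    [IsProbabilityMeasure μ] {ξ : Ω → ℝ} (hξ : Measurable ξ) {p T : ℝ} (hp : 0 ≤ p) (hT : 0 < T)
    (htail : ∀ x, T ≤ x → μ {ω | x ≤ |ξ ω|} ≤ ENNReal.ofReal ((T / (2 * x)) ^ (p + 1))) :
    ∫⁻ ω, ENNReal.ofReal (|ξ ω| ^ p) ∂μ ≤ 2 * ENNReal.ofReal (T ^ p) := by
  set E : ℕ → Set Ω := fun k => {ω | T * 2 ^ k ≤ |ξ ω|}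
  have hE : ∀ k, MeasurableSet (E k) := fun k => hξ.abs measurableSet_Ici
  have hterm : ∀ k : ℕ, ENNReal.ofReal ((T * 2 ^ (k + 1)) ^ p) * μ (E k) ≤
      ENNReal.ofReal (T ^ p) * 2⁻¹ ^ (k + 1) := by
    intro k
    have hy : 0 < T * 2 ^ (k + 1) := by positivity
    have hTy : T / (T * 2 ^ (k + 1)) = 2⁻¹ ^ (k + 1) := by
      rw [div_mul_cancel_left₀ hT.ne', inv_pow]
    calc ENNReal.ofReal ((T * 2 ^ (k + 1)) ^ p) * μ (E k)
        ≤ ENNReal.ofReal ((T * 2 ^ (k + 1)) ^ p) *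
            ENNReal.ofReal ((T / (T * 2 ^ (k + 1))) ^ (p + 1)) := by
          gcongr
          rw [show T * 2 ^ (k + 1) = 2 * (T * 2 ^ k) by ring]
          exact htail _ (le_mul_of_one_le_right hT.le (one_le_pow₀ one_le_two))
      _ = ENNReal.ofReal (T ^ p) * 2⁻¹ ^ (k + 1) := by
          rw [← ENNReal.ofReal_mul (by positivity), rpow_mul_div_rpow_add_one hT hy, hTy,
            ENNReal.ofReal_mul (by positivity), ENNReal.ofReal_pow (by norm_num),
            ENNReal.ofReal_inv_of_pos two_pos, ENNReal.ofReal_ofNat]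
  calc ∫⁻ ω, ENNReal.ofReal (|ξ ω| ^ p) ∂μ
      ≤ ∫⁻ ω, (ENNReal.ofReal (T ^ p) + ∑' k, (E k).indicator
          (fun _ => ENNReal.ofReal ((T * 2 ^ (k + 1)) ^ p)) ω) ∂μ :=
        lintegral_mono fun ω => ofReal_rpow_le_add_tsum_indicator (abs_nonneg _) hT hp
    _ = ENNReal.ofReal (T ^ p) + ∑' k, ENNReal.ofReal ((T * 2 ^ (k + 1)) ^ p) * μ (E k) := by
        rw [lintegral_add_left measurable_const, lintegral_const, measure_univ, mul_one,
          lintegral_tsum fun k => (measurable_const.indicator (hE k)).aemeasurable]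
        simp_rw [lintegral_indicator_const (hE _)]
    _ ≤ ENNReal.ofReal (T ^ p) + ∑' k : ℕ, ENNReal.ofReal (T ^ p) * 2⁻¹ ^ (k + 1) :=
        add_le_add le_rfl (ENNReal.tsum_le_tsum hterm)
    _ = 2 * ENNReal.ofReal (T ^ p) := by
        rw [ENNReal.tsum_mul_left, ENNReal.tsum_geometric_add_one, ENNReal.one_sub_inv_two,
          inv_inv, ENNReal.inv_mul_cancel two_ne_zero ENNReal.ofNat_ne_top, mul_one, two_mul]

lemma Lnorm_le_two_mul_of_tail_le {Ω : Type*} [MeasurableSpace Ω] {μ : Measure Ω}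
    [IsProbabilityMeasure μ] {ξ : Ω → ℝ} (hξ : Measurable ξ) {p T : ℝ} (hp : 1 ≤ p) (hT : 0 < T)
    (htail : ∀ x, T ≤ x → μ {ω | x ≤ |ξ ω|} ≤ ENNReal.ofReal ((T / (2 * x)) ^ (p + 1))) :
    Lnorm μ p ξ ≤ 2 * T := by
  have hp0 : 0 < p := zero_lt_one.trans_le hp
  have hint : ∫ ω, |ξ ω| ^ p ∂μ ≤ (2 * T) ^ p := by
    rw [integral_eq_lintegral_of_nonneg_ae (.of_forall fun ω => by positivity)
      (hξ.abs.pow_const p).aestronglyMeasurable]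
    refine ENNReal.toReal_le_of_le_ofReal (by positivity) ?_
    calc ∫⁻ ω, ENNReal.ofReal (|ξ ω| ^ p) ∂μ ≤ 2 * ENNReal.ofReal (T ^ p) :=
          lintegral_ofReal_rpow_abs_le hξ hp0.le hT htail
      _ = ENNReal.ofReal (2 * T ^ p) := by rw [ENNReal.ofReal_mul zero_le_two, ENNReal.ofReal_ofNat]
      _ ≤ ENNReal.ofReal ((2 * T) ^ p) := by
          rw [mul_rpow zero_le_two hT.le]
          gcongr
          simpa using rpow_le_rpow_of_exponent_le one_le_two hp
  calc Lnorm μ p ξ ≤ ((2 * T) ^ p) ^ (1 / p) :=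
        rpow_le_rpow (integral_nonneg fun ω => by positivity) hint (by positivity)
    _ = 2 * T := by rw [← rpow_mul (by positivity), mul_one_div_cancel hp0.ne', rpow_one]

/-- If a random variable `ξ` satisfies the two-sided tail estimate
`max(P(ξ ≥ x), P(ξ ≤ -x)) ≤ exp(-C₁ x^q (ln x)^{-qr})` for all `x > e`, then there is a
constant `C₃ = C₃(C₁,q,r)` such that `|ξ|_p ≤ C₃ p^{1/q} (ln p)^r` for all `p ≥ 4`. -/
theorem stmt_11
    {Ω : Type*} [mΩ : MeasurableSpace Ω] (μ : Measure Ω) [IsProbabilityMeasure μ]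
    (ξ : Ω → ℝ) (hξ : Measurable ξ)
    (C₁ q r : ℝ) (hC₁ : 0 < C₁) (hq : 0 < q)
    (htail : ∀ x : ℝ, Real.exp 1 < x →
      max (μ {ω | x ≤ ξ ω}) (μ {ω | ξ ω ≤ -x}) ≤
        ENNReal.ofReal (Real.exp (-(C₁ * x ^ q * (Real.log x) ^ (-(q * r)))))) :
    ∃ C₃ : ℝ, 0 < C₃ ∧ ∀ p : ℝ, 4 ≤ p →
      Lnorm μ p ξ ≤ C₃ * p ^ (1 / q) * (Real.log p) ^ r := by
  obtain ⟨c, hscale, hc⟩ := ((eventually_tail_scale hC₁ hq r).and (eventually_gt_atTop 0)).exists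
  refine ⟨2 * c, by positivity, fun p hp => ?_⟩
  obtain ⟨hTe, hrate⟩ := hscale p hp
  set T := c * p ^ (1 / q) * log p ^ r
  have hT : 0 < T := (exp_pos 1).trans hTe
  suffices htail' : ∀ x, T ≤ x → μ {ω | x ≤ |ξ ω|} ≤ ENNReal.ofReal ((T / (2 * x)) ^ (p + 1)) by
    calc Lnorm μ p ξ ≤ 2 * T := Lnorm_le_two_mul_of_tail_le hξ (by linarith) hT htail'
      _ = 2 * c * p ^ (1 / q) * log p ^ r := by ring
  intro x hx
  have hs : 1 ≤ x / T := (one_le_div hT).mpr hx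
  have hbound := two_mul_exp_neg_le_rpow (by linarith) hs (hrate (x / T) hs)
  rw [mul_div_cancel₀ _ hT.ne', one_div, mul_div_assoc', inv_div] at hbound
  calc μ {ω | x ≤ |ξ ω|}
      ≤ 2 * ENNReal.ofReal (exp (-(C₁ * x ^ q * log x ^ (-(q * r))))) :=
        measure_le_abs_le_two_mul (htail x (hTe.trans_le hx))
    _ ≤ ENNReal.ofReal ((T / (2 * x)) ^ (p + 1)) := by
        rw [← ENNReal.ofReal_ofNat, ← ENNReal.ofReal_mul zero_le_two]
        exact ENNReal.ofReal_le_ofReal hbound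
end

section
/- Let ξ be a random variable, and let C₃ > 0, q > 0 and r be constants such that |ξ|_p ≤ C₃ · p^{1/q} · (ln p)^r for all p ≥ 4. Then there exist constants C > 0 and x₀ > e (depending only on C₃, q, r) such that for all x > x₀: max(P(ξ ≥ x), P(ξ ≤ −x)) ≤ exp(−C x^q (ln x)^{−q r}). -/
open MeasureTheory ProbabilityTheory Real Filter Finset
open scoped ENNReal

open scoped Topology

/-!
Markov's inequality at the exponent `p = C x^q (log x)^{-qr}`: whenever `|ξ|_p ≤ x / e`,
`P(|ξ| ≥ x) ≤ (|ξ|_p / x)^p ≤ e^{-p}`. Since `log p ~ q log x`, the moment hypothesis gives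
`|ξ|_p ≤ C₃ C^{1/q} x (log x)^{-r} (log p)^r ≈ C₃ C^{1/q} q^r x`, which is at most `x / e` for
large `x` once `C` is small enough.
-/

theorem meas_le_abs_le_ofReal_exp_neg {Ω : Type*} [MeasurableSpace Ω] {μ : Measure Ω}
    {ξ : Ω → ℝ} (hξ : AEStronglyMeasurable ξ μ) {p x : ℝ} (hp : 0 < p) (hx : 0 < x)
    (hmom : eLpNorm ξ (ENNReal.ofReal p) μ ≤ ENNReal.ofReal (x / exp 1)) :
    μ {ω | x ≤ |ξ ω|} ≤ ENNReal.ofReal (exp (-p)) := by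
  have hmarkov := mul_meas_ge_le_pow_eLpNorm' μ (by simpa using hp) ENNReal.ofReal_ne_top hξ
    (ENNReal.ofReal x)
  simp only [ENNReal.toReal_ofReal hp.le, enorm_eq_ofReal_abs,
    ENNReal.ofReal_le_ofReal_iff (abs_nonneg _)] at hmarkov
  have hxp : ENNReal.ofReal x ^ p ≠ 0 := by simp [hx, hp]
  rw [← ENNReal.mul_le_mul_iff_right hxp (by simp [hp.le])]
  calc ENNReal.ofReal x ^ p * μ {ω | x ≤ |ξ ω|}
      ≤ eLpNorm ξ (ENNReal.ofReal p) μ ^ p := hmarkov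
    _ ≤ ENNReal.ofReal (x / exp 1) ^ p := by gcongr
    _ = ENNReal.ofReal x ^ p * ENNReal.ofReal (exp (-p)) := by
      rw [ENNReal.ofReal_rpow_of_nonneg (by positivity) hp.le,
        ENNReal.ofReal_rpow_of_nonneg hx.le hp.le, ← ENNReal.ofReal_mul (by positivity),
        div_rpow hx.le (exp_pos 1).le, exp_one_rpow, exp_neg, div_eq_mul_inv]

noncomputable def tailExponent (ε q r x : ℝ) : ℝ := ε * x ^ q * log x ^ (-(q * r))

theorem tailExponent_pos {ε q r x : ℝ} (hε : 0 < ε) (hx : 1 < x) : 0 < tailExponent ε q r x := by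
  have := log_pos hx
  unfold tailExponent; positivity

theorem log_tailExponent {ε q r x : ℝ} (hε : 0 < ε) (hx : 1 < x) :
    log (tailExponent ε q r x) = log ε + q * log x - q * r * log (log x) := by
  have hx0 : 0 < x := by linarith
  have hlx := log_pos hx
  rw [tailExponent, log_mul (by positivity) (by positivity), log_mul hε.ne' (by positivity),
    log_rpow hx0, log_rpow hlx]
  ring

theorem tendsto_log_tailExponent_div_log {ε : ℝ} (hε : 0 < ε) (q r : ℝ) :
    Tendsto (fun x => log (tailExponent ε q r x) / log x) atTop (𝓝 q) := by
  have hinv : Tendsto (fun x => (log x)⁻¹) atTop (𝓝 0) := tendsto_log_atTop.inv_tendsto_atTop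
  have hloglog : Tendsto (fun x => log (log x) / log x) atTop (𝓝 0) :=
    isLittleO_log_id_atTop.tendsto_div_nhds_zero.comp tendsto_log_atTop
  have hlim := ((hinv.const_mul (log ε)).add_const q).sub (hloglog.const_mul (q * r))
  simp only [mul_zero, zero_add, sub_zero] at hlim
  refine hlim.congr' ?_
  filter_upwards [eventually_gt_atTop 1] with x hx
  have := (log_pos hx).ne'
  rw [log_tailExponent hε hx]
  field_simp

theorem tendsto_tailExponent_atTop {ε q : ℝ} (hε : 0 < ε) (hq : 0 < q) (r : ℝ) :
    Tendsto (tailExponent ε q r) atTop atTop := by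
  have hlog : Tendsto (fun x => log (tailExponent ε q r x)) atTop atTop :=
    ((tendsto_log_tailExponent_div_log hε q r).pos_mul_atTop hq tendsto_log_atTop).congr'
      (EventuallyEq.div_mul_cancel_atTop tendsto_log_atTop)
  refine (tendsto_exp_atTop.comp hlog).congr' ?_
  filter_upwards [eventually_gt_atTop 1] with x hx
  exact exp_log (tailExponent_pos hε hx)

theorem tailExponent_rpow_one_div {ε q r x : ℝ} (hε : 0 ≤ ε) (hx : 1 ≤ x) (hq : q ≠ 0) :
    tailExponent ε q r x ^ (1 / q) = ε ^ (1 / q) * x * log x ^ (-r) := by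
  have hlx := log_nonneg hx
  have hx0 : 0 ≤ x := by linarith
  rw [tailExponent, mul_rpow (by positivity) (by positivity), mul_rpow hε (by positivity),
    ← rpow_mul hx0, ← rpow_mul hlx, mul_one_div_cancel hq, rpow_one]
  congr 2
  field_simp

theorem exists_pos_eventually_moment_bound_le {C₃ q : ℝ} (hC₃ : 0 < C₃) (hq : 0 < q) (r : ℝ) :
    ∃ ε : ℝ, 0 < ε ∧ ∀ᶠ x in atTop,
      C₃ * tailExponent ε q r x ^ (1 / q) * log (tailExponent ε q r x) ^ r ≤ x / exp 1 := by
  -- `(log p / log x)^r → q^r` stays below `2 q^r`, and `ε^{1/q} = K⁻¹` absorbs that factor.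
  set K := 2 * exp 1 * C₃ * q ^ r with hKdef
  have hqr : 0 < q ^ r := rpow_pos_of_pos hq r
  have hK : 0 < K := by positivity
  have hε : 0 < K⁻¹ ^ q := by positivity
  refine ⟨K⁻¹ ^ q, hε, ?_⟩
  have hεq : (K⁻¹ ^ q) ^ (1 / q) = K⁻¹ := by
    rw [← rpow_mul (by positivity), mul_one_div_cancel hq.ne', rpow_one]
  have hratio : ∀ᶠ x in atTop, (log (tailExponent (K⁻¹ ^ q) q r x) / log x) ^ r ≤ 2 * q ^ r :=
    ((tendsto_log_tailExponent_div_log hε q r).rpow_const (Or.inl hq.ne')).eventually_le_const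
      (by linarith)
  filter_upwards [(tendsto_tailExponent_atTop hε hq r).eventually_ge_atTop 1, hratio,
    eventually_gt_atTop 1] with x hp1 hratio hx
  set p := tailExponent (K⁻¹ ^ q) q r x
  have hlx := log_pos hx
  have hlogp : 0 ≤ log p := log_nonneg hp1
  calc C₃ * p ^ (1 / q) * log p ^ r
      = C₃ * K⁻¹ * x * (log p / log x) ^ r := by
        rw [tailExponent_rpow_one_div hε.le hx.le hq.ne', hεq, div_rpow hlogp hlx.le,
          rpow_neg hlx.le]
        field_simp
    _ ≤ C₃ * K⁻¹ * x * (2 * q ^ r) := by gcongr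
    _ = x / exp 1 := by
        rw [hKdef]
        field_simp

theorem stmt_12_general
    {Ω : Type*} [mΩ : MeasurableSpace Ω] (μ : Measure Ω)
    (ξ : Ω → ℝ) (hξ : Measurable ξ)
    (C₃ q r : ℝ) (hC₃ : 0 < C₃) (hq : 0 < q)
    (hmom : ∀ p : ℝ, 4 ≤ p →
      eLpNorm ξ (ENNReal.ofReal p) μ ≤
        ENNReal.ofReal (C₃ * p ^ (1 / q) * (Real.log p) ^ r)) :
    ∃ C : ℝ, 0 < C ∧ ∃ x₀ : ℝ, Real.exp 1 < x₀ ∧ ∀ x : ℝ, x₀ < x →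
      max (μ {ω | x ≤ ξ ω}) (μ {ω | ξ ω ≤ -x}) ≤
        ENNReal.ofReal (Real.exp (-(C * x ^ q * (Real.log x) ^ (-(q * r))))) := by
  obtain ⟨C, hC, hmoment⟩ := exists_pos_eventually_moment_bound_le hC₃ hq r
  obtain ⟨a, ha⟩ :=
    ((tendsto_tailExponent_atTop hC hq r).eventually_ge_atTop 4).and hmoment
      |>.exists_forall_of_atTop
  refine ⟨C, hC, max a (exp 1 + 1), by simp, fun x hx => ?_⟩
  obtain ⟨hp4, hbound⟩ := ha x (le_of_max_le_left hx.le)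
  have hx0 : 0 < x := by linarith [le_of_max_le_right hx.le, exp_pos 1]
  have htail : μ {ω | x ≤ |ξ ω|} ≤ ENNReal.ofReal (exp (-tailExponent C q r x)) :=
    meas_le_abs_le_ofReal_exp_neg hξ.aestronglyMeasurable (by linarith) hx0
      ((hmom _ hp4).trans (ENNReal.ofReal_le_ofReal hbound))
  exact max_le ((measure_mono fun ω (hω : x ≤ ξ ω) => hω.trans (le_abs_self _)).trans htail)
    ((measure_mono fun ω (hω : ξ ω ≤ -x) => (le_neg.mp hω).trans (neg_le_abs _)).trans htail)

/-- If `|ξ|_p ≤ C₃ p^{1/q} (ln p)^r` for all `p ≥ 4` (in the strong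
sense that the `L^p` quasinorm is finite and so bounded), then there are constants
`C > 0` and `x₀ > e` such that for all `x > x₀`,
`max(P(ξ ≥ x), P(ξ ≤ -x)) ≤ exp(-C x^q (ln x)^{-qr})`. -/
theorem stmt_12
    {Ω : Type*} [mΩ : MeasurableSpace Ω] (μ : Measure Ω) [IsProbabilityMeasure μ]
    (ξ : Ω → ℝ) (hξ : Measurable ξ)
    (C₃ q r : ℝ) (hC₃ : 0 < C₃) (hq : 0 < q)
    (hmom : ∀ p : ℝ, 4 ≤ p →
      eLpNorm ξ (ENNReal.ofReal p) μ ≤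
        ENNReal.ofReal (C₃ * p ^ (1 / q) * (Real.log p) ^ r)) :
    ∃ C : ℝ, 0 < C ∧ ∃ x₀ : ℝ, Real.exp 1 < x₀ ∧ ∀ x : ℝ, x₀ < x →
      max (μ {ω | x ≤ ξ ω}) (μ {ω | ξ ω ≤ -x}) ≤
        ENNReal.ofReal (Real.exp (-(C * x ^ q * (Real.log x) ^ (-(q * r))))) :=
  stmt_12_general (mΩ := mΩ) μ ξ hξ C₃ q r hC₃ hq hmom
end

section
/- Let η be a Poisson random variable with parameter 1 and set ξ = η − 1, so that E ξ = 0. Then the p-th moment norm of ξ satisfies the asymptotic |ξ|_p ~ p/(e·ln p) as p → ∞, i.e. lim_{p→∞} |ξ|_p · (e·ln p)/p = 1. -/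
open MeasureTheory ProbabilityTheory Real Filter Finset
open scoped ENNReal

/-!
Write `M(p) = E|η - 1|^p = ∑ₖ |k - 1|^p e⁻¹ / k!` and `L = ln p`; it suffices to show
`ln M(p) / p = L - ln L - 1 + o(1)`.

Lower bound: keep the single term with `k - 1 ≈ p / L`; since `k! ≤ p^k ≤ e^{p + 2L}`, it is at
least `(p/L)^p e^{-1-p-2L}`.

Upper bound: Young's inequality `x^p ≤ (p/(e s))^p e^{s x}` with `x = k + 1 ≥ |k - 1|` gives
`M(p) ≤ (p/(e s))^p e^{s - 1 + e^s}`, and `s = L - ln L`, for which `e^s = p / L`, makes the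
exponent `p (L - ln L - 1) + o(p)`.
-/

open scoped Nat Topology

noncomputable def poissonAbsCentralMoment (p : ℝ) : ℝ :=
  ∑' k : ℕ, |(k : ℝ) - 1| ^ p * (exp (-1) / k !)

lemma map_eq_poissonMeasure_one {Ω : Type*} [MeasurableSpace Ω] {μ : Measure Ω}
    {η : Ω → ℕ} (hη : Measurable η)
    (hpois : ∀ k : ℕ, μ {ω | η ω = k} = ENNReal.ofReal (exp (-1) / k !)) :
    μ.map η = poissonMeasure 1 := by
  refine Measure.ext_of_singleton fun k => ?_
  rw [Measure.map_apply hη (measurableSet_singleton k), poissonMeasure_singleton]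
  simpa [Set.preimage] using hpois k

lemma integral_abs_sub_one_rpow_eq {Ω : Type*} [MeasurableSpace Ω] {μ : Measure Ω}
    {η : Ω → ℕ} (hη : Measurable η)
    (hpois : ∀ k : ℕ, μ {ω | η ω = k} = ENNReal.ofReal (exp (-1) / k !)) (p : ℝ) :
    ∫ ω, |(η ω : ℝ) - 1| ^ p ∂μ = poissonAbsCentralMoment p := by
  rw [← integral_map (f := fun k : ℕ => |(k : ℝ) - 1| ^ p) hη.aemeasurable
    .of_discrete, map_eq_poissonMeasure_one hη hpois, integral_poissonMeasure]
  simp [poissonAbsCentralMoment, mul_comm]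

lemma rpow_le_exp_mul_add {p s x : ℝ} (hp : 0 < p) (hs : 0 < s) (hx : 0 ≤ x) :
    x ^ p ≤ exp (p * log (p / s) - p + s * x) := by
  rcases hx.eq_or_lt with rfl | hx
  · rw [zero_rpow hp.ne']; positivity
  rw [rpow_def_of_pos hx, exp_le_exp]
  have hlog := log_le_sub_one_of_pos (show 0 < x / (p / s) by positivity)
  rw [log_div hx.ne' (by positivity)] at hlog
  have h := mul_le_mul_of_nonneg_left hlog hp.le
  rw [show p * (x / (p / s) - 1) = s * x - p by field_simp] at h
  linarith

lemma abs_sub_one_rpow_mul_le {p s : ℝ} (hp : 0 < p) (hs : 0 < s) (k : ℕ) :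
    |(k : ℝ) - 1| ^ p * (exp (-1) / k !)
      ≤ exp (p * log (p / s) - p + s - 1) * (exp s ^ k / k !) := by
  have hk : |(k : ℝ) - 1| ≤ k + 1 := abs_le.2 ⟨by linarith [k.cast_nonneg (α := ℝ)], by linarith⟩
  calc |(k : ℝ) - 1| ^ p * (exp (-1) / k !)
      ≤ exp (p * log (p / s) - p + s * (k + 1)) * (exp (-1) / k !) := by
        gcongr
        exact (rpow_le_rpow (abs_nonneg _) hk hp.le).trans
          (rpow_le_exp_mul_add hp hs (by positivity))
    _ = exp (p * log (p / s) - p + s - 1) * (exp s ^ k / k !) := by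
        rw [← exp_nat_mul, mul_div_assoc', mul_div_assoc', ← exp_add, ← exp_add]
        ring_nf

lemma summable_abs_sub_one_rpow_mul {p : ℝ} (hp : 0 < p) :
    Summable fun k : ℕ => |(k : ℝ) - 1| ^ p * (exp (-1) / k !) :=
  .of_nonneg_of_le (fun _ => by positivity) (abs_sub_one_rpow_mul_le hp one_pos)
    ((summable_pow_div_factorial _).mul_left _)

lemma poissonAbsCentralMoment_le {p s : ℝ} (hp : 0 < p) (hs : 0 < s) :
    poissonAbsCentralMoment p ≤ exp (p * log (p / s) - p + s - 1 + exp s) := by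
  have hexp : HasSum (fun k : ℕ => exp s ^ k / k !) (exp (exp s)) := by
    simpa only [← exp_eq_exp_ℝ] using NormedSpace.expSeries_div_hasSum_exp (exp s)
  calc poissonAbsCentralMoment p
      ≤ ∑' k : ℕ, exp (p * log (p / s) - p + s - 1) * (exp s ^ k / k !) :=
        (summable_abs_sub_one_rpow_mul hp).tsum_le_tsum (abs_sub_one_rpow_mul_le hp hs)
          (hexp.summable.mul_left _)
    _ = exp (p * log (p / s) - p + s - 1 + exp s) := by
        rw [tsum_mul_left, hexp.tsum_eq, exp_add]

lemma le_poissonAbsCentralMoment {p : ℝ} (hp : 0 < p) (k : ℕ) :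
    |(k : ℝ) - 1| ^ p * (exp (-1) / k !) ≤ poissonAbsCentralMoment p :=
  (summable_abs_sub_one_rpow_mul hp).le_tsum k fun _ _ => by positivity

lemma poissonAbsCentralMoment_pos {p : ℝ} (hp : 0 < p) : 0 < poissonAbsCentralMoment p :=
  lt_of_lt_of_le (by simp [exp_pos]) (le_poissonAbsCentralMoment hp 0)

lemma exp_le_poissonAbsCentralMoment {p : ℝ} (hp : 0 < p) (hL : 3 ≤ log p) :
    exp (p * (log p - log (log p)) - 1 - p - 2 * log p) ≤ poissonAbsCentralMoment p := by
  have hL0 : 0 < log p := by linarith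
  have hp4 : 4 ≤ p := by linarith [add_one_le_exp (log p), exp_log hp]
  set k := ⌊p / log p⌋₊ + 2
  have hk_lower : p / log p ≤ (k : ℝ) - 1 := by
    push_cast [k]; linarith [Nat.lt_floor_add_one (p / log p)]
  have hk_upper : (k : ℝ) ≤ p / log p + 2 := by
    push_cast [k]; linarith [Nat.floor_le (div_pos hp hL0).le]
  have hk_le : (k : ℝ) ≤ p := by
    have : p / log p ≤ p / 3 := div_le_div_of_nonneg_left hp.le (by norm_num) hL
    linarith
  have hfact : (k ! : ℝ) ≤ exp (p + 2 * log p) :=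
    calc (k ! : ℝ) ≤ (k : ℝ) ^ k := by exact_mod_cast k.factorial_le_pow
      _ ≤ p ^ k := by gcongr
      _ = exp (k * log p) := by rw [← rpow_natCast, rpow_def_of_pos hp, mul_comm]
      _ ≤ exp (p + 2 * log p) := by
        gcongr
        calc (k : ℝ) * log p ≤ (p / log p + 2) * log p := by gcongr
          _ = p + 2 * log p := by field_simp
  calc exp (p * (log p - log (log p)) - 1 - p - 2 * log p)
      = (p / log p) ^ p * (exp (-1) / exp (p + 2 * log p)) := by
        rw [rpow_def_of_pos (by positivity), log_div hp.ne' hL0.ne', ← exp_sub, ← exp_add]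
        ring_nf
    _ ≤ |(k : ℝ) - 1| ^ p * (exp (-1) / k !) := by
        gcongr
        exact hk_lower.trans (le_abs_self _)
    _ ≤ poissonAbsCentralMoment p := le_poissonAbsCentralMoment hp k

lemma log_poissonAbsCentralMoment_div_ge {p : ℝ} (hp : 0 < p) (hL : 3 ≤ log p) :
    log p - log (log p) - 1 - (1 + 2 * log p) / p ≤ log (poissonAbsCentralMoment p) / p := by
  rw [le_div_iff₀ hp, ← log_exp (_ * p)]
  refine log_le_log (exp_pos _) ((exp_le_exp.2 (le_of_eq ?_)).trans
    (exp_le_poissonAbsCentralMoment hp hL))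
  field_simp
  ring

lemma log_poissonAbsCentralMoment_div_le {p : ℝ} (hp : 0 < p) (hL : 1 ≤ log p) :
    log (poissonAbsCentralMoment p) / p
      ≤ log p - log (log p - log (log p)) - 1 + log p / p + 1 / log p := by
  have hLL : 0 ≤ log (log p) := log_nonneg hL
  have hs : 0 < log p - log (log p) := by
    linarith [log_le_sub_one_of_pos (by linarith : 0 < log p)]
  have hexp_s : exp (log p - log (log p)) = p / log p := by
    rw [exp_sub, exp_log hp, exp_log (by linarith)]
  have hM := log_le_log (poissonAbsCentralMoment_pos hp) (poissonAbsCentralMoment_le hp hs)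
  rw [log_exp, hexp_s, log_div hp.ne' hs.ne'] at hM
  rw [div_le_iff₀ hp]
  have h1 : log p / p * p = log p := by field_simp
  have h2 : 1 / log p * p = p / log p := by ring
  nlinarith

lemma tendsto_log_div_self_atTop : Tendsto (fun x : ℝ => log x / x) atTop (𝓝 0) :=
  isLittleO_log_id_atTop.tendsto_div_nhds_zero

lemma tendsto_log_sub_log_sub_log_atTop :
    Tendsto (fun x : ℝ => log x - log (x - log x)) atTop (𝓝 0) := by
  have h : Tendsto (fun x : ℝ => -log (1 - log x / x)) atTop (𝓝 0) := by
    have h1 : Tendsto (fun x : ℝ => 1 - log x / x) atTop (𝓝 1) := by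
      simpa using (tendsto_const_nhds (x := (1 : ℝ))).sub tendsto_log_div_self_atTop
    simpa using ((continuousAt_log one_ne_zero).tendsto.comp h1).neg
  refine h.congr' ?_
  filter_upwards [eventually_gt_atTop 0] with x hx
  have hs : 0 < x - log x := by linarith [log_le_sub_one_of_pos hx]
  rw [one_sub_div hx.ne', log_div hs.ne' hx.ne']
  ring

lemma tendsto_log_poissonAbsCentralMoment_div_sub :
    Tendsto (fun p => log (poissonAbsCentralMoment p) / p - (log p - log (log p) - 1))
      atTop (𝓝 0) := by
  have hinv : Tendsto (fun p : ℝ => 1 / p) atTop (𝓝 0) := by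
    simpa only [one_div] using tendsto_inv_atTop_zero
  have hlower : Tendsto (fun p : ℝ => -((1 + 2 * log p) / p)) atTop (𝓝 0) := by
    simpa [add_div, mul_div_assoc] using (hinv.add (tendsto_log_div_self_atTop.const_mul 2)).neg
  have hupper : Tendsto (fun p : ℝ =>
      log (log p) - log (log p - log (log p)) + log p / p + 1 / log p) atTop (𝓝 0) := by
    simpa using ((tendsto_log_sub_log_sub_log_atTop.comp tendsto_log_atTop).add
      tendsto_log_div_self_atTop).add (hinv.comp tendsto_log_atTop)
  refine tendsto_of_tendsto_of_tendsto_of_le_of_le' hlower hupper ?_ ?_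
  all_goals
    filter_upwards [eventually_gt_atTop 0, tendsto_log_atTop.eventually_ge_atTop 3]
      with p hp hL
  · linarith [log_poissonAbsCentralMoment_div_ge hp hL]
  · linarith [log_poissonAbsCentralMoment_div_le hp (by linarith)]

theorem stmt_13_general
    {Ω : Type*} [mΩ : MeasurableSpace Ω] (μ : Measure Ω)
    (η : Ω → ℕ) (hη : Measurable η)
    (hpois : ∀ k : ℕ, μ {ω | η ω = k} = ENNReal.ofReal (Real.exp (-1) / k.factorial)) :
    Filter.Tendsto
      (fun p : ℝ => Lnorm μ p (fun ω => (η ω : ℝ) - 1) * (Real.exp 1 * Real.log p) / p)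
      Filter.atTop (nhds 1) := by
  have h := (continuous_exp.tendsto 0).comp tendsto_log_poissonAbsCentralMoment_div_sub
  rw [exp_zero] at h
  refine h.congr' ?_
  filter_upwards [eventually_gt_atTop 1] with p hp
  have hp0 : 0 < p := by linarith
  have hL : 0 < log p := log_pos hp
  rw [Function.comp_apply, Lnorm, integral_abs_sub_one_rpow_eq hη hpois,
    rpow_def_of_pos (poissonAbsCentralMoment_pos hp0), exp_sub, exp_sub, exp_sub, exp_log hp0,
    exp_log hL]
  field_simp

/-- If `η` is Poisson with parameter 1 and `ξ = η - 1`, then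
`|ξ|_p ~ p/(e ln p)` as `p → ∞`, i.e. `|ξ|_p · (e ln p)/p → 1`. -/
theorem stmt_13
    {Ω : Type*} [mΩ : MeasurableSpace Ω] (μ : Measure Ω) [IsProbabilityMeasure μ]
    (η : Ω → ℕ) (hη : Measurable η)
    (hpois : ∀ k : ℕ, μ {ω | η ω = k} = ENNReal.ofReal (Real.exp (-1) / k.factorial)) :
    Filter.Tendsto
      (fun p : ℝ => Lnorm μ p (fun ω => (η ω : ℝ) - 1) * (Real.exp 1 * Real.log p) / p)
      Filter.atTop (nhds 1) :=
  stmt_13_general (mΩ := mΩ) μ η hη hpois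
end
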